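/- For every real β > 1, the limit lim_{P→∞} C₃,₀(P)/(σ₀²(P))³ exists and equals 1/( β·(β−1)·(ln(1 − 1/β))³ ), which is strictly negative. -/

import Mathlib

open Filter Topology

/-- `a = (√β − 1)²`. -/
noncomputable def a (β : ℝ) : ℝ := (Real.sqrt β - 1) ^ 2

/-- `b = (√β + 1)²`. -/
noncomputable def b (β : ℝ) : ℝ := (Real.sqrt β + 1) ^ 2

/-- The leading-order asymptotic variance `σ₀²(P)`. -/
noncomputable def sigma0sq (β P : ℝ) : ℝ :=
  2 * Real.log ((((β + a β * P) / (β + b β * P)) ^ ((1 : ℝ) / 4) +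
    ((β + b β * P) / (β + a β * P)) ^ ((1 : ℝ) / 4)) / 2)

/-- The leading-order third cumulant `C₃,₀(P)`. -/
noncomputable def C₃₀ (β P : ℝ) : ℝ :=
  (β + 1) / (2 * β) - 3 * β * P / (β ^ 2 + 2 * β * (β + 1) * P + (β - 1) ^ 2 * P ^ 2) -
    ((β - 1) ^ 2 * ((β ^ 2 + 1) * P ^ 3 + 3 * β * (β + 1) * P ^ 2) +
        3 * β ^ 2 * (β ^ 2 + 1) * P + β ^ 3 * (β + 1)) /
      (2 * β * (β ^ 2 + 2 * β * (β + 1) * P + (β - 1) ^ 2 * P ^ 2) ^ ((3 : ℝ) / 2))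

-- auxiliary: sigma0sq limit
lemma sigma_lim (β : ℝ) (hβ : 1 < β) :
    Tendsto (fun P => sigma0sq β P) atTop (𝓝 (Real.log (β / (β - 1)))) := by
  have hβ0 : (0:ℝ) < β := by linarith
  have hs1 : 1 < Real.sqrt β := by
    rw [show (1:ℝ) = Real.sqrt 1 by simp]
    exact Real.sqrt_lt_sqrt (by norm_num) hβ
  set s := Real.sqrt β with hs_def
  have hs2 : s ^ 2 = β := Real.sq_sqrt hβ0.le
  have ha : 0 < a β := pow_pos (by linarith) 2
  have hb : 0 < b β := pow_pos (by linarith) 2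
  have hinv : Tendsto (fun P : ℝ => P⁻¹) atTop (𝓝 0) := tendsto_inv_atTop_zero
  -- limit of the inner ratio
  have key : ∀ c d : ℝ, 0 < c → 0 < d →
      Tendsto (fun P => (β + c * P) / (β + d * P)) atTop (𝓝 (c / d)) := by
    intro c d hc hd
    have base : Tendsto (fun P : ℝ => (β * P⁻¹ + c) / (β * P⁻¹ + d)) atTop
        (𝓝 ((β * 0 + c) / (β * 0 + d))) := by
      exact Tendsto.div (((hinv.const_mul β)).add tendsto_const_nhds)
        (((hinv.const_mul β)).add tendsto_const_nhds) (by simpa using hd.ne')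
    have heq : (fun P : ℝ => (β * P⁻¹ + c) / (β * P⁻¹ + d)) =ᶠ[atTop]
        (fun P => (β + c * P) / (β + d * P)) := by
      filter_upwards [eventually_ge_atTop (1:ℝ)] with P hP
      have hP0 : (0:ℝ) < P := by linarith
      have h1 : β * P⁻¹ + d ≠ 0 := by positivity
      have h2 : β + d * P ≠ 0 := by positivity
      rw [div_eq_div_iff h1 h2]
      field_simp
    have := base.congr' heq
    simpa using this
  have hx := key (a β) (b β) ha hb
  have hx' := key (b β) (a β) hb ha
  have hxpos : 0 < a β / b β := div_pos ha hb
  set x := a β / b β with hxdef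
  set u := x ^ ((1:ℝ)/4) with hudef
  have hu0 : 0 < u := Real.rpow_pos_of_pos hxpos _
  have hbainv : b β / a β = x⁻¹ := by rw [hxdef, inv_div]
  have h1 : Tendsto (fun P => ((β + a β * P) / (β + b β * P)) ^ ((1:ℝ)/4)) atTop (𝓝 u) :=
    (Real.continuousAt_rpow_const _ _ (Or.inr (by norm_num))).tendsto.comp hx
  have h2 : Tendsto (fun P => ((β + b β * P) / (β + a β * P)) ^ ((1:ℝ)/4)) atTop (𝓝 u⁻¹) := by
    have := (Real.continuousAt_rpow_const (b β / a β) ((1:ℝ)/4) (Or.inr (by norm_num))).tendsto.comp hx'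
    rwa [hbainv, Real.inv_rpow hxpos.le, ← hudef] at this
  set t := (u + u⁻¹) / 2 with htdef
  have ht0 : 0 < t := by positivity
  have hsum : Tendsto (fun P => (((β + a β * P) / (β + b β * P)) ^ ((1:ℝ)/4) +
      ((β + b β * P) / (β + a β * P)) ^ ((1:ℝ)/4)) / 2) atTop (𝓝 t) :=
    (h1.add h2).div_const 2
  have hlog : Tendsto (fun P => sigma0sq β P) atTop (𝓝 (2 * Real.log t)) := by
    simp only [sigma0sq]
    exact ((Real.continuousAt_log ht0.ne').tendsto.comp hsum).const_mul 2
  -- value: 2 log t = log (β/(β-1))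
  have hu2 : u ^ 2 = (s - 1) / (s + 1) := by
    have e1 : u ^ 2 = x ^ ((1:ℝ)/2) := by
      rw [hudef, ← Real.rpow_natCast (x ^ ((1:ℝ)/4)) 2, ← Real.rpow_mul hxpos.le]
      norm_num
    rw [e1, ← Real.sqrt_eq_rpow, hxdef]
    have : a β / b β = ((s - 1) / (s + 1)) ^ 2 := by
      rw [div_pow]; rfl
    rw [this, Real.sqrt_sq (div_nonneg (by linarith) (by linarith))]
  have ht2 : t ^ 2 = β / (β - 1) := by
    have e : t ^ 2 = (u ^ 2 + 2 + (u ^ 2)⁻¹) / 4 := by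
      rw [htdef]; field_simp; ring
    rw [e, hu2, ← hs2]
    have h1 : s - 1 ≠ 0 := by linarith
    have h2 : s + 1 ≠ 0 := by linarith
    have h3 : s ^ 2 - 1 ≠ 0 := by nlinarith
    field_simp
    ring
  have hval : 2 * Real.log t = Real.log (β / (β - 1)) := by
    rw [← ht2, Real.log_pow]; push_cast; ring
  rwa [hval] at hlog

-- auxiliary: C₃₀ limit
lemma C_lim (β : ℝ) (hβ : 1 < β) :
    Tendsto (fun P => C₃₀ β P) atTop (𝓝 (-(1 / (β * (β - 1))))) := by
  have hβ0 : (0:ℝ) < β := by linarith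
  have hinv : Tendsto (fun P : ℝ => P⁻¹) atTop (𝓝 0) := tendsto_inv_atTop_zero
  have hb1 : β - 1 ≠ 0 := by linarith
  -- second term → 0
  have h2 : Tendsto (fun P => 3 * β * P / (β ^ 2 + 2 * β * (β + 1) * P + (β - 1) ^ 2 * P ^ 2))
      atTop (𝓝 0) := by
    have base : Tendsto (fun P : ℝ => (3 * β * P⁻¹) /
        (β ^ 2 * P⁻¹ ^ 2 + 2 * β * (β + 1) * P⁻¹ + (β - 1) ^ 2)) atTop
        (𝓝 ((3 * β * 0) / (β ^ 2 * 0 ^ 2 + 2 * β * (β + 1) * 0 + (β - 1) ^ 2))) := by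
      refine Tendsto.div (hinv.const_mul _) ?_ (by simpa [sub_eq_zero] using hβ.ne')
      exact (((hinv.pow 2).const_mul _).add (hinv.const_mul _)).add tendsto_const_nhds
    have heq : (fun P : ℝ => (3 * β * P⁻¹) /
        (β ^ 2 * P⁻¹ ^ 2 + 2 * β * (β + 1) * P⁻¹ + (β - 1) ^ 2)) =ᶠ[atTop]
        (fun P => 3 * β * P / (β ^ 2 + 2 * β * (β + 1) * P + (β - 1) ^ 2 * P ^ 2)) := by
      filter_upwards [eventually_ge_atTop (1:ℝ)] with P hP
      have hP0 : (0:ℝ) < P := by linarith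
      have hd1 : β ^ 2 * P⁻¹ ^ 2 + 2 * β * (β + 1) * P⁻¹ + (β - 1) ^ 2 ≠ 0 := by positivity
      have hd2 : β ^ 2 + 2 * β * (β + 1) * P + (β - 1) ^ 2 * P ^ 2 ≠ 0 := by positivity
      rw [div_eq_div_iff hd1 hd2]
      field_simp
    have := base.congr' heq
    simpa using this
  -- third term
  have h3 : Tendsto (fun P => ((β - 1) ^ 2 * ((β ^ 2 + 1) * P ^ 3 + 3 * β * (β + 1) * P ^ 2) +
        3 * β ^ 2 * (β ^ 2 + 1) * P + β ^ 3 * (β + 1)) /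
      (2 * β * (β ^ 2 + 2 * β * (β + 1) * P + (β - 1) ^ 2 * P ^ 2) ^ ((3:ℝ)/2))) atTop
      (𝓝 ((β ^ 2 + 1) / (2 * β * (β - 1)))) := by
    have hden : Tendsto (fun P : ℝ => β ^ 2 * P⁻¹ ^ 2 + 2 * β * (β + 1) * P⁻¹ + (β - 1) ^ 2)
        atTop (𝓝 ((β - 1) ^ 2)) := by
      have := (((hinv.pow 2).const_mul (β ^ 2)).add (hinv.const_mul (2 * β * (β + 1)))).add
        (tendsto_const_nhds (α := ℝ) (x := (β - 1) ^ 2))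
      simpa using this
    have hdenp : Tendsto (fun P : ℝ =>
        (β ^ 2 * P⁻¹ ^ 2 + 2 * β * (β + 1) * P⁻¹ + (β - 1) ^ 2) ^ ((3:ℝ)/2)) atTop
        (𝓝 (((β - 1) ^ 2) ^ ((3:ℝ)/2))) :=
      (Real.continuousAt_rpow_const _ _ (Or.inr (by norm_num))).tendsto.comp hden
    have hnum : Tendsto (fun P : ℝ =>
        (β - 1) ^ 2 * ((β ^ 2 + 1) + 3 * β * (β + 1) * P⁻¹) + 3 * β ^ 2 * (β ^ 2 + 1) * P⁻¹ ^ 2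
          + β ^ 3 * (β + 1) * P⁻¹ ^ 3) atTop (𝓝 ((β - 1) ^ 2 * (β ^ 2 + 1))) := by
      have := (((tendsto_const_nhds (α := ℝ) (x := (β ^ 2 + 1))).add
          (hinv.const_mul (3 * β * (β + 1)))).const_mul ((β - 1) ^ 2)).add
        (((hinv.pow 2).const_mul (3 * β ^ 2 * (β ^ 2 + 1))).add
          ((hinv.pow 3).const_mul (β ^ 3 * (β + 1))))
      simp only [mul_zero, add_zero, zero_pow, zero_add] at this
      convert this using 2 <;> ring
    have hrp : ((β - 1) ^ 2 : ℝ) ^ ((3:ℝ)/2) = (β - 1) ^ 3 := by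
      rw [← Real.rpow_natCast (β - 1) 2, ← Real.rpow_mul (by linarith : (0:ℝ) ≤ β - 1)]
      norm_num
    have hrpne : (((β - 1) ^ 2 : ℝ) ^ ((3:ℝ)/2)) ≠ 0 := by
      rw [hrp]; positivity
    have base := hnum.div ((hdenp.const_mul (2 * β))) (mul_ne_zero (by positivity) hrpne)
    have heq : (fun P : ℝ =>
        ((β - 1) ^ 2 * ((β ^ 2 + 1) + 3 * β * (β + 1) * P⁻¹) + 3 * β ^ 2 * (β ^ 2 + 1) * P⁻¹ ^ 2
          + β ^ 3 * (β + 1) * P⁻¹ ^ 3) /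
        (2 * β * (β ^ 2 * P⁻¹ ^ 2 + 2 * β * (β + 1) * P⁻¹ + (β - 1) ^ 2) ^ ((3:ℝ)/2)))
        =ᶠ[atTop]
        (fun P => ((β - 1) ^ 2 * ((β ^ 2 + 1) * P ^ 3 + 3 * β * (β + 1) * P ^ 2) +
          3 * β ^ 2 * (β ^ 2 + 1) * P + β ^ 3 * (β + 1)) /
          (2 * β * (β ^ 2 + 2 * β * (β + 1) * P + (β - 1) ^ 2 * P ^ 2) ^ ((3:ℝ)/2))) := by
      filter_upwards [eventually_ge_atTop (1:ℝ)] with P hP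
      have hP0 : (0:ℝ) < P := by linarith
      have hQ : β ^ 2 + 2 * β * (β + 1) * P + (β - 1) ^ 2 * P ^ 2
          = P ^ 2 * (β ^ 2 * P⁻¹ ^ 2 + 2 * β * (β + 1) * P⁻¹ + (β - 1) ^ 2) := by
        field_simp
      have hP3 : (P ^ 2 : ℝ) ^ ((3:ℝ)/2) = P ^ 3 := by
        rw [← Real.rpow_natCast P 2, ← Real.rpow_mul hP0.le]
        norm_num
      have hsplit : (β ^ 2 + 2 * β * (β + 1) * P + (β - 1) ^ 2 * P ^ 2) ^ ((3:ℝ)/2)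
          = P ^ 3 * (β ^ 2 * P⁻¹ ^ 2 + 2 * β * (β + 1) * P⁻¹ + (β - 1) ^ 2) ^ ((3:ℝ)/2) := by
        rw [hQ, Real.mul_rpow (by positivity) (by positivity), hP3]
      rw [hsplit]
      have hdpos : (0:ℝ) < (β ^ 2 * P⁻¹ ^ 2 + 2 * β * (β + 1) * P⁻¹ + (β - 1) ^ 2) ^ ((3:ℝ)/2) :=
        Real.rpow_pos_of_pos (by positivity) _
      rw [div_eq_div_iff (by positivity) (by positivity)]
      field_simp
    have := base.congr' heq
    have hvv : (β - 1) ^ 2 * (β ^ 2 + 1) / (2 * β * ((β - 1) ^ 2) ^ ((3:ℝ)/2))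
        = (β ^ 2 + 1) / (2 * β * (β - 1)) := by
      rw [hrp]
      rw [div_eq_div_iff (by positivity) (by positivity)]
      ring
    rwa [hvv] at this
  have hC := (tendsto_const_nhds (α := ℝ) (x := (β + 1) / (2 * β))).sub h2 |>.sub h3
  have hval : (β + 1) / (2 * β) - 0 - (β ^ 2 + 1) / (2 * β * (β - 1)) = -(1 / (β * (β - 1))) := by
    field_simp
    ring
  rw [hval] at hC
  exact hC

theorem stmt13 (β : ℝ) (hβ : 1 < β) :
    Tendsto (fun P => C₃₀ β P / (sigma0sq β P) ^ 3) atTop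
        (𝓝 (1 / (β * (β - 1) * (Real.log (1 - 1 / β)) ^ 3))) ∧
      1 / (β * (β - 1) * (Real.log (1 - 1 / β)) ^ 3) < 0 := by
  have hβ0 : (0:ℝ) < β := by linarith
  have hb1 : (0:ℝ) < β - 1 := by linarith
  have hratio : 1 < β / (β - 1) := by
    rw [lt_div_iff₀ hb1]; linarith
  have hlogpos : 0 < Real.log (β / (β - 1)) := Real.log_pos hratio
  have hlogeq : Real.log (1 - 1 / β) = -Real.log (β / (β - 1)) := by
    rw [show (1 - 1 / β) = (β / (β - 1))⁻¹ by rw [inv_div]; field_simp, Real.log_inv]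
  have hlogneg : Real.log (1 - 1 / β) < 0 := by rw [hlogeq]; linarith
  constructor
  · have hmain := (C_lim β hβ).div ((sigma_lim β hβ).pow 3) (by positivity)
    have hval : -(1 / (β * (β - 1))) / (Real.log (β / (β - 1))) ^ 3
        = 1 / (β * (β - 1) * (Real.log (1 - 1 / β)) ^ 3) := by
      have hc : (Real.log (1 - 1 / β)) ^ 3 = -((Real.log (β / (β - 1))) ^ 3) := by
        rw [hlogeq]; ring
      rw [hc, mul_neg, div_neg, neg_div]
      congr 1
      rw [div_div]
    rw [← hval]
    exact hmain
  · have hcube : (Real.log (1 - 1 / β)) ^ 3 < 0 := Odd.pow_neg ⟨1, by norm_num⟩ hlogneg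
    have : β * (β - 1) * (Real.log (1 - 1 / β)) ^ 3 < 0 :=
      mul_neg_of_pos_of_neg (by positivity) hcube
    exact one_div_neg.mpr this
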